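/- arXiv:2506.18058 — 2 statements merged into one kernel-verified Lean document; each statement's English description precedes it below -/
import Mathlib

section
/- Let γ = 1 or γ = 3/2, let D_φ, D_c, w, Δt > 0, let m_x, m_y ≥ 1, Δx, Δy > 0, set h = min(Δx, Δy), let M be the Dirichlet Kronecker-sum Laplacian of sizes (m_x, m_y) and steps (Δx, Δy), and let N be a real matrix of the same size with ‖N‖₁ ≤ 4·(1/Δx² + 1/Δy²) and ‖N‖_∞ ≤ 4·(1/Δx² + 1/Δy²). If either h² > 8·D_φ/w or Δt < γ·h²/(8·D_φ − w·h²), and furthermore Δt < γ·h²/(8·D_c), then the spectral radii of the two iteration matrices Δt·D_φ·((γ + w·Δt)·I − Δt·D_φ·M)⁻¹·N and Δt·D_c·(γ·I − Δt·D_c·M)⁻¹·N are both strictly less than 1. -/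
open Matrix Kronecker

noncomputable def dirLap (m : ℕ) (Δ : ℝ) : Matrix (Fin m) (Fin m) ℝ :=
  Matrix.of fun i j =>
    if i = j then -2 / Δ ^ 2
    else if (i : ℕ) + 1 = (j : ℕ) ∨ (j : ℕ) + 1 = (i : ℕ) then 1 / Δ ^ 2
    else 0

noncomputable def neuLap (m : ℕ) (Δ : ℝ) : Matrix (Fin m) (Fin m) ℝ :=
  Matrix.of fun i j =>
    if i = j then -2 / Δ ^ 2
    else if ((i : ℕ) = 0 ∧ (j : ℕ) = 1) ∨ ((i : ℕ) = m - 1 ∧ (j : ℕ) = m - 2) then 2 / Δ ^ 2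
    else if (i : ℕ) + 1 = (j : ℕ) ∨ (j : ℕ) + 1 = (i : ℕ) then 1 / Δ ^ 2
    else 0

noncomputable def kronLapD (mx my : ℕ) (Δx Δy : ℝ) :
    Matrix (Fin my × Fin mx) (Fin my × Fin mx) ℝ :=
  (1 : Matrix (Fin my) (Fin my) ℝ) ⊗ₖ dirLap mx Δx +
    dirLap my Δy ⊗ₖ (1 : Matrix (Fin mx) (Fin mx) ℝ)

noncomputable def kronLapN (mx my : ℕ) (Δx Δy : ℝ) :
    Matrix (Fin my × Fin mx) (Fin my × Fin mx) ℝ :=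
  (1 : Matrix (Fin my) (Fin my) ℝ) ⊗ₖ neuLap mx Δx +
    neuLap my Δy ⊗ₖ (1 : Matrix (Fin mx) (Fin mx) ℝ)

noncomputable def specRad {n : Type*} [Fintype n] [DecidableEq n] (A : Matrix n n ℝ) : ℝ :=
  sSup ((fun z : ℂ => ‖z‖) '' spectrum ℂ (A.map Complex.ofReal))

noncomputable def specRadC {n : Type*} [Fintype n] [DecidableEq n] (A : Matrix n n ℂ) : ℝ :=
  sSup ((fun z : ℂ => ‖z‖) '' spectrum ℂ A)

noncomputable def norm1 {n : Type*} [Fintype n] (A : Matrix n n ℝ) : ℝ :=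
  ⨆ j, ∑ i, |A i j|

noncomputable def normInf {n : Type*} [Fintype n] (A : Matrix n n ℝ) : ℝ :=
  ⨆ i, ∑ j, |A i j|

noncomputable def norm2 {n : Type*} [Fintype n] [DecidableEq n] (A : Matrix n n ℝ) : ℝ :=
  ‖Matrix.toEuclideanCLM (𝕜 := ℝ) A‖

namespace Matrix

variable {n K : Type*} [Fintype n] [DecidableEq n]

section NormedField

variable [NormedField K]

def RowDiagDominantBy (A : Matrix n n K) (α : ℝ) : Prop :=
  ∀ i, ∑ j ∈ Finset.univ.erase i, ‖A i j‖ + α ≤ ‖A i i‖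

namespace RowDiagDominantBy

variable {A E : Matrix n n K} {α : ℝ}

theorem det_ne_zero (hA : A.RowDiagDominantBy α) (hα : 0 < α) : A.det ≠ 0 :=
  det_ne_zero_of_sum_row_lt_diag fun i => by linarith [hA i]

theorem smul (hA : A.RowDiagDominantBy α) (μ : K) : (μ • A).RowDiagDominantBy (‖μ‖ * α) := by
  intro i
  simp only [smul_apply, smul_eq_mul, norm_mul, ← Finset.mul_sum]
  nlinarith [hA i, norm_nonneg μ]

theorem sub (hA : A.RowDiagDominantBy α) {q : ℝ} (hE : ∀ i, ∑ j, ‖E i j‖ ≤ q) :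
    (A - E).RowDiagDominantBy (α - q) := by
  intro i
  have hsplit := Finset.add_sum_erase Finset.univ (fun j => ‖E i j‖) (Finset.mem_univ i)
  have hoff : ∑ j ∈ Finset.univ.erase i, ‖(A - E) i j‖
      ≤ ∑ j ∈ Finset.univ.erase i, ‖A i j‖ + ∑ j ∈ Finset.univ.erase i, ‖E i j‖ := by
    rw [← Finset.sum_add_distrib]
    exact Finset.sum_le_sum fun j _ => norm_sub_le _ _
  have hdiag : ‖A i i‖ - ‖E i i‖ ≤ ‖(A - E) i i‖ := norm_sub_norm_le _ _
  linarith [hA i, hE i]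

end RowDiagDominantBy

end NormedField

theorem RowDiagDominantBy.map_ofReal {A : Matrix n n ℝ} {α : ℝ} (hA : A.RowDiagDominantBy α) :
    (A.map Complex.ofReal).RowDiagDominantBy α := by
  simpa only [RowDiagDominantBy, map_apply, Complex.norm_real] using hA

end Matrix

open Matrix

theorem specRad_smul_inv_mul_le {n : Type*} [Fintype n] [DecidableEq n] {B N : Matrix n n ℝ}
    {β q c : ℝ} (hB : B.RowDiagDominantBy β) (hβ : 0 < β) (hN : ∀ i, ∑ j, |N i j| ≤ q)
    (hq : 0 ≤ q) (hc : 0 ≤ c) :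
    specRad (c • (B⁻¹ * N)) ≤ c * q / β := by
  have hBinv : B * B⁻¹ = 1 := mul_nonsing_inv B (hB.det_ne_zero hβ).isUnit
  have hfactor : ∀ μ : ℂ,
      B.map Complex.ofReal * (algebraMap ℂ _ μ - (c • (B⁻¹ * N)).map Complex.ofReal)
        = μ • B.map Complex.ofReal - (c : ℂ) • N.map Complex.ofReal := by
    intro μ
    have hmap : B.map Complex.ofReal * (c • (B⁻¹ * N)).map Complex.ofReal
        = (B * (c • (B⁻¹ * N))).map Complex.ofReal :=
      (Matrix.map_mul (f := Complex.ofRealHom)).symm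
    rw [Algebra.algebraMap_eq_smul_one, mul_sub, mul_smul_comm, mul_one, hmap, mul_smul_comm,
      ← Matrix.mul_assoc, hBinv, Matrix.one_mul]
    congr 1
    ext i j
    simp
  apply Real.sSup_le _ (by positivity)
  rintro _ ⟨μ, hμ, rfl⟩
  by_contra! hlt
  have hgap : 0 < ‖μ‖ * β - c * q := by rw [div_lt_iff₀ hβ] at hlt; linarith
  have hcN : ∀ i, ∑ j, ‖((c : ℂ) • N.map Complex.ofReal) i j‖ ≤ c * q := fun i => by
    simpa [← Finset.mul_sum, abs_of_nonneg hc] using mul_le_mul_of_nonneg_left (hN i) hc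
  have hdet := ((hB.map_ofReal.smul μ).sub hcN).det_ne_zero hgap
  rw [← hfactor, det_mul] at hdet
  exact (spectrum.mem_iff.1 hμ) ((isUnit_iff_isUnit_det _).2 (right_ne_zero_of_mul hdet).isUnit)

namespace Matrix

variable {m n : Type*}

def IsMetzler (M : Matrix n n ℝ) : Prop :=
  Pairwise fun i j => 0 ≤ M i j

theorem IsMetzler.kroneckerSum [DecidableEq m] [DecidableEq n] {A : Matrix n n ℝ}
    {B : Matrix m m ℝ} (hA : A.IsMetzler) (hB : B.IsMetzler) :
    ((1 : Matrix m m ℝ) ⊗ₖ A + B ⊗ₖ (1 : Matrix n n ℝ)).IsMetzler := by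
  rintro ⟨i₁, i₂⟩ ⟨j₁, j₂⟩ hij
  simp only [add_apply, kroneckerMap_apply, one_apply]
  by_cases h₁ : i₁ = j₁
  · have h₂ : i₂ ≠ j₂ := fun h₂ => hij (by rw [h₁, h₂])
    simpa [h₁, h₂] using hA h₂
  · by_cases h₂ : i₂ = j₂ <;> simp [h₁, h₂, hB h₁]

variable [Fintype m] [Fintype n] {R : Type*}

theorem sum_kronecker_apply [NonUnitalNonAssocSemiring R] (A : Matrix m m R) (B : Matrix n n R)
    (i : m × n) :
    ∑ j, (A ⊗ₖ B) i j = (∑ a, A i.1 a) * ∑ b, B i.2 b := by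
  simp [Fintype.sum_prod_type, Finset.sum_mul_sum]

theorem sum_kroneckerSum_apply [DecidableEq m] [DecidableEq n] [NonAssocSemiring R]
    (A : Matrix n n R) (B : Matrix m m R) (i : m × n) :
    ∑ j, ((1 : Matrix m m R) ⊗ₖ A + B ⊗ₖ (1 : Matrix n n R)) i j
      = ∑ a, A i.2 a + ∑ b, B i.1 b := by
  simp only [add_apply]
  rw [Finset.sum_add_distrib, sum_kronecker_apply, sum_kronecker_apply]
  simp [one_apply]

theorem rowDiagDominantBy_smul_one_sub_smul [DecidableEq n] {M : Matrix n n ℝ} (hM : M.IsMetzler)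
    (hrow : ∀ i, ∑ j, M i j ≤ 0) {β c : ℝ} (hβ : 0 ≤ β) (hc : 0 ≤ c) :
    (β • (1 : Matrix n n ℝ) - c • M).RowDiagDominantBy β := by
  intro i
  have hoff : ∀ j ∈ Finset.univ.erase i, ‖(β • (1 : Matrix n n ℝ) - c • M) i j‖ = c * M i j :=
    fun j hj => by
      have hji := Finset.ne_of_mem_erase hj
      simp [one_apply_ne hji.symm, abs_of_nonneg hc, abs_of_nonneg (hM hji.symm)]
  have hsplit := Finset.add_sum_erase Finset.univ (M i) (Finset.mem_univ i)
  have hoff_nonneg : 0 ≤ ∑ j ∈ Finset.univ.erase i, M i j :=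
    Finset.sum_nonneg fun j hj => hM (Finset.ne_of_mem_erase hj).symm
  have hMii : c * M i i ≤ 0 := mul_nonpos_of_nonneg_of_nonpos hc (by linarith [hrow i])
  have hdiag : ‖(β • (1 : Matrix n n ℝ) - c • M) i i‖ = β - c * M i i := by
    simp [abs_of_nonneg (by linarith : 0 ≤ β - c * M i i)]
  rw [Finset.sum_congr rfl hoff, ← Finset.mul_sum, hdiag]
  nlinarith [hrow i]

end Matrix

theorem card_filter_adjacent_le_two {m : ℕ} (i : Fin m) :
    (Finset.univ.filter fun j : Fin m => (i : ℕ) + 1 = j ∨ (j : ℕ) + 1 = i).card ≤ 2 := by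
  rw [Finset.filter_or]
  refine (Finset.card_union_le _ _).trans (show _ + _ ≤ 1 + 1 from Nat.add_le_add ?_ ?_) <;>
    refine Finset.card_le_one.2 fun a ha b hb => Fin.ext ?_ <;>
    simp only [Finset.mem_filter] at ha hb <;> omega

theorem dirLap_apply (m : ℕ) (Δ : ℝ) (i j : Fin m) :
    dirLap m Δ i j = (if i = j then -2 / Δ ^ 2 else 0)
      + if (i : ℕ) + 1 = j ∨ (j : ℕ) + 1 = i then 1 / Δ ^ 2 else 0 := by
  by_cases hij : i = j
  · subst hij
    simp [dirLap]
  · simp [dirLap, hij]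

theorem dirLap_isMetzler (m : ℕ) (Δ : ℝ) : (dirLap m Δ).IsMetzler := by
  intro i j hij
  rw [dirLap_apply, if_neg hij, zero_add]
  split_ifs <;> positivity

theorem sum_dirLap_apply_nonpos (m : ℕ) (Δ : ℝ) (i : Fin m) : ∑ j, dirLap m Δ i j ≤ 0 := by
  simp only [dirLap_apply, Finset.sum_add_distrib, Finset.sum_ite_eq, Finset.mem_univ, if_true,
    ← Finset.sum_filter, Finset.sum_const, nsmul_eq_mul]
  have hcard : ((Finset.univ.filter fun j : Fin m => (i : ℕ) + 1 = j ∨ (j : ℕ) + 1 = i).card : ℝ)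
      ≤ 2 := by exact_mod_cast card_filter_adjacent_le_two i
  have hΔ : 0 ≤ 1 / Δ ^ 2 := by positivity
  rw [show -2 / Δ ^ 2 = -2 * (1 / Δ ^ 2) by ring]
  nlinarith [mul_le_mul_of_nonneg_right hcard hΔ]

theorem kronLapD_isMetzler (mx my : ℕ) (Δx Δy : ℝ) : (kronLapD mx my Δx Δy).IsMetzler :=
  (dirLap_isMetzler mx Δx).kroneckerSum (dirLap_isMetzler my Δy)

theorem sum_kronLapD_apply_nonpos (mx my : ℕ) (Δx Δy : ℝ) (i : Fin my × Fin mx) :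
    ∑ j, kronLapD mx my Δx Δy i j ≤ 0 := by
  rw [kronLapD, sum_kroneckerSum_apply]
  linarith [sum_dirLap_apply_nonpos mx Δx i.2, sum_dirLap_apply_nonpos my Δy i.1]

theorem sum_abs_le_normInf {n : Type*} [Fintype n] (N : Matrix n n ℝ) (i : n) :
    ∑ j, |N i j| ≤ normInf N :=
  le_ciSup (f := fun i => ∑ j, |N i j|) (Set.finite_range _).bddAbove i

theorem normInf_nonneg {n : Type*} [Fintype n] (N : Matrix n n ℝ) : 0 ≤ normInf N :=
  Real.iSup_nonneg fun _ => Finset.sum_nonneg fun _ _ => abs_nonneg _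

theorem specRad_smul_inv_smul_one_sub_smul_mul_lt_one {n : Type*} [Fintype n] [DecidableEq n]
    {M : Matrix n n ℝ} (hM : M.IsMetzler) (hrow : ∀ i, ∑ j, M i j ≤ 0) (N : Matrix n n ℝ)
    {c β q : ℝ} (hc : 0 < c) (hβ : 0 < β) (hN : normInf N ≤ q) (hlt : c * q < β) :
    specRad (c • ((β • (1 : Matrix n n ℝ) - c • M)⁻¹ * N)) < 1 :=
  calc specRad (c • ((β • (1 : Matrix n n ℝ) - c • M)⁻¹ * N))
      ≤ c * q / β :=
        specRad_smul_inv_mul_le (rowDiagDominantBy_smul_one_sub_smul hM hrow hβ.le hc.le) hβ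
          (fun i => (sum_abs_le_normInf N i).trans hN) ((normInf_nonneg N).trans hN) hc.le
    _ < 1 := (div_lt_one hβ).2 hlt

theorem four_mul_inv_sq_add_inv_sq_le {Δx Δy : ℝ} (hΔx : 0 < Δx) (hΔy : 0 < Δy) :
    4 * (1 / Δx ^ 2 + 1 / Δy ^ 2) ≤ 8 / min Δx Δy ^ 2 := by
  have hh : 0 < min Δx Δy := lt_min hΔx hΔy
  have hx : 1 / Δx ^ 2 ≤ 1 / min Δx Δy ^ 2 := one_div_le_one_div_of_le (by positivity)
    (pow_le_pow_left₀ hh.le (min_le_left _ _) 2)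
  have hy : 1 / Δy ^ 2 ≤ 1 / min Δx Δy ^ 2 := one_div_le_one_div_of_le (by positivity)
    (pow_le_pow_left₀ hh.le (min_le_right _ _) 2)
  linarith [show 8 / min Δx Δy ^ 2 = 4 * (2 * (1 / min Δx Δy ^ 2)) by ring]

theorem mul_eight_div_sq_lt_of_stability {γ D w Δt h : ℝ} (hγ : 0 ≤ γ) (hw : 0 < w)
    (hΔt : 0 < Δt) (hh : 0 < h) (hcond : h ^ 2 > 8 * D / w ∨ Δt < γ * h ^ 2 / (8 * D - w * h ^ 2)) :
    Δt * D * (8 / h ^ 2) < γ + w * Δt := by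
  rw [show Δt * D * (8 / h ^ 2) = 8 * Δt * D / h ^ 2 by ring, div_lt_iff₀ (by positivity)]
  have hγh : 0 ≤ γ * h ^ 2 := by positivity
  rcases hcond with hlarge | hsmall
  · rw [gt_iff_lt, div_lt_iff₀ hw] at hlarge
    nlinarith
  · have hden : 0 < 8 * D - w * h ^ 2 := by
      by_contra! hden
      linarith [div_nonpos_of_nonneg_of_nonpos hγh hden]
    rw [lt_div_iff₀ hden] at hsmall
    nlinarith

theorem stmt5_general (γ : ℝ) (hγ : γ = 1 ∨ γ = 3 / 2)
    (Dφ Dc w Δt : ℝ) (hDφ : 0 < Dφ) (hDc : 0 < Dc) (hw : 0 < w) (hΔt : 0 < Δt)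
    (mx my : ℕ)
    (Δx Δy : ℝ) (hΔx : 0 < Δx) (hΔy : 0 < Δy)
    (h : ℝ) (hh : h = min Δx Δy)
    (M N : Matrix (Fin my × Fin mx) (Fin my × Fin mx) ℝ)
    (hM : M = kronLapD mx my Δx Δy)
    (hNinf : normInf N ≤ 4 * (1 / Δx ^ 2 + 1 / Δy ^ 2))
    (hcond1 : h ^ 2 > 8 * Dφ / w ∨ Δt < γ * h ^ 2 / (8 * Dφ - w * h ^ 2))
    (hcond2 : Δt < γ * h ^ 2 / (8 * Dc)) :
    specRad ((Δt * Dφ) • (((γ + w * Δt) • 1 - (Δt * Dφ) • M)⁻¹ * N)) < 1 ∧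
      specRad ((Δt * Dc) • ((γ • 1 - (Δt * Dc) • M)⁻¹ * N)) < 1 := by
  subst hM
  have hγpos : 0 < γ := by rcases hγ with rfl | rfl <;> norm_num
  have hpos : 0 < h := hh ▸ lt_min hΔx hΔy
  have hN : normInf N ≤ 8 / h ^ 2 := hh ▸ hNinf.trans (four_mul_inv_sq_add_inv_sq_le hΔx hΔy)
  have hφ : Δt * Dφ * (8 / h ^ 2) < γ + w * Δt :=
    mul_eight_div_sq_lt_of_stability hγpos.le hw hΔt hpos hcond1
  have hc : Δt * Dc * (8 / h ^ 2) < γ := by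
    rw [lt_div_iff₀ (by positivity)] at hcond2
    rw [show Δt * Dc * (8 / h ^ 2) = 8 * Δt * Dc / h ^ 2 by ring, div_lt_iff₀ (by positivity)]
    linarith
  exact ⟨specRad_smul_inv_smul_one_sub_smul_mul_lt_one (kronLapD_isMetzler ..)
      (sum_kronLapD_apply_nonpos mx my Δx Δy) N (by positivity) (by positivity) hN hφ,
    specRad_smul_inv_smul_one_sub_smul_mul_lt_one (kronLapD_isMetzler ..)
      (sum_kronLapD_apply_nonpos mx my Δx Δy) N (by positivity) hγpos hN hc⟩

theorem stmt5 (γ : ℝ) (hγ : γ = 1 ∨ γ = 3 / 2)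
    (Dφ Dc w Δt : ℝ) (hDφ : 0 < Dφ) (hDc : 0 < Dc) (hw : 0 < w) (hΔt : 0 < Δt)
    (mx my : ℕ) (hmx : 1 ≤ mx) (hmy : 1 ≤ my)
    (Δx Δy : ℝ) (hΔx : 0 < Δx) (hΔy : 0 < Δy)
    (h : ℝ) (hh : h = min Δx Δy)
    (M N : Matrix (Fin my × Fin mx) (Fin my × Fin mx) ℝ)
    (hM : M = kronLapD mx my Δx Δy)
    (hN1 : norm1 N ≤ 4 * (1 / Δx ^ 2 + 1 / Δy ^ 2))
    (hNinf : normInf N ≤ 4 * (1 / Δx ^ 2 + 1 / Δy ^ 2))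
    (hcond1 : h ^ 2 > 8 * Dφ / w ∨ Δt < γ * h ^ 2 / (8 * Dφ - w * h ^ 2))
    (hcond2 : Δt < γ * h ^ 2 / (8 * Dc)) :
    specRad ((Δt * Dφ) • (((γ + w * Δt) • 1 - (Δt * Dφ) • M)⁻¹ * N)) < 1 ∧
      specRad ((Δt * Dc) • ((γ • 1 - (Δt * Dc) • M)⁻¹ * N)) < 1 :=
  stmt5_general γ hγ Dφ Dc w Δt hDφ hDc hw hΔt mx my Δx Δy hΔx hΔy h hh M N hM hNinf hcond1 hcond2
end

section
/- Let γ = 1 or γ = 3/2, let D_φ, D_c, w, Δt > 0, let m_x, m_y ≥ 2, Δx, Δy > 0, set h = min(Δx, Δy) and s = 1/Δx² + 1/Δy², let M_N be the Neumann Kronecker-sum Laplacian of sizes (m_x, m_y) and steps (Δx, Δy), and let N be a real matrix of the same size with N·N = 0, ‖N‖₁ ≤ 4/h², and ‖N‖_∞ ≤ 4/h². Assume Δt·D_φ·s < γ + w·Δt and Δt·D_c·s < γ. If either h² > (1 + √41)·D_φ/w or Δt < γ·(√41 − 1)·h²/(40·D_φ + 2·w·h²), and furthermore Δt < γ·(√41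 − 1)·h²/(40·D_c), then the spectral radii of the two iteration matrices Δt·D_φ·((γ + w·Δt)·I − Δt·D_φ·M_N)⁻¹·N and Δt·D_c·(γ·I − Δt·D_c·M_N)⁻¹·N are both strictly less than 1. -/
open Matrix Kronecker

/-!
Both iteration matrices have the form `α • (β • 1 - α • M)⁻¹ * N` with `α ≥ 0`, `β > 0`, and
`M = M_N` a matrix with nonnegative off-diagonal entries and nonpositive row sums. Hence
`β • 1 - α • M` is strictly diagonally dominant with margin `β`, and Varah's bound gives
`‖(β • 1 - α • M)⁻¹‖_∞ ≤ 1 / β`. The spectral radius is at most the `∞`-operator norm, so it is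
at most `α ‖N‖_∞ / β ≤ 4 α / (β h²)`, and the step-size conditions give `4 α < β h²`.
-/

open scoped Matrix.Norms.Operator

namespace Matrix

variable {n : Type*} [Fintype n]

structure IsSubgenerator {R : Type*} [Ring R] [PartialOrder R] (M : Matrix n n R) : Prop where
  offDiag_nonneg : ∀ i j, i ≠ j → 0 ≤ M i j
  sum_row_nonpos : ∀ i, ∑ j, M i j ≤ 0

theorem IsSubgenerator.kroneckerSum {m R : Type*} [Fintype m] [DecidableEq m]
    [DecidableEq n] [Ring R] [PartialOrder R] [IsOrderedRing R]
    {A : Matrix n n R} {B : Matrix m m R} (hA : A.IsSubgenerator) (hB : B.IsSubgenerator) :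
    (1 ⊗ₖ A + B ⊗ₖ 1 : Matrix (m × n) (m × n) R).IsSubgenerator where
  offDiag_nonneg := by
    rintro ⟨i, k⟩ ⟨j, l⟩ hne
    simp only [add_apply, kronecker_apply, one_apply]
    by_cases hij : i = j
    · subst hij
      have hkl : k ≠ l := fun h => hne (by rw [h])
      simpa [hkl] using hA.offDiag_nonneg k l hkl
    · by_cases hkl : k = l
      · simpa [hij, hkl] using hB.offDiag_nonneg i j hij
      · simp [hij, hkl]
  sum_row_nonpos := by
    rintro ⟨i, k⟩
    simp only [add_apply, kronecker_apply, one_apply, Fintype.sum_prod_type,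
      Finset.sum_add_distrib, ite_mul, one_mul, zero_mul, mul_ite, mul_one, mul_zero,
      Finset.sum_ite_irrel, Finset.sum_const_zero, Finset.sum_ite_eq, Finset.mem_univ, if_true]
    exact add_nonpos (hA.sum_row_nonpos k) (hB.sum_row_nonpos i)

def IsDiagDominantBy [DecidableEq n] {𝕜 : Type*} [Norm 𝕜] (B : Matrix n n 𝕜) (β : ℝ) : Prop :=
  ∀ i, β + ∑ j ∈ Finset.univ.erase i, ‖B i j‖ ≤ ‖B i i‖

theorem linfty_opNorm_eq_normInf (A : Matrix n n ℝ) : ‖A‖ = normInf A := by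
  have hrow : ∀ i, ((∑ j, ‖A i j‖₊ : NNReal) : ℝ) = ∑ j, |A i j| := fun i => by push_cast; rfl
  have hnonneg : 0 ≤ normInf A :=
    Real.iSup_nonneg fun i => Finset.sum_nonneg fun j _ => abs_nonneg _
  refine le_antisymm ?_ (Real.iSup_le (fun i => ?_) (norm_nonneg A))
  · rw [linfty_opNorm_def]
    refine NNReal.coe_le_coe.2 (Finset.sup_le (a := ⟨normInf A, hnonneg⟩) fun i _ => ?_)
    apply NNReal.coe_le_coe.1
    rw [hrow]
    exact le_ciSup (f := fun i => ∑ j, |A i j|) (Set.finite_range _).bddAbove i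
  · rw [linfty_opNorm_def, ← hrow]
    exact NNReal.coe_le_coe.2 (Finset.le_sup (f := fun i => ∑ j, ‖A i j‖₊) (Finset.mem_univ i))

theorem specRad_le_linfty_opNorm [DecidableEq n] (A : Matrix n n ℝ) : specRad A ≤ ‖A‖ := by
  refine Real.sSup_le ?_ (norm_nonneg A)
  rintro _ ⟨z, hz, rfl⟩
  rcases isEmpty_or_nonempty n with hn | hn
  · simp [spectrum.of_subsingleton] at hz
  calc ‖z‖ ≤ ‖A.map Complex.ofReal‖ := spectrum.norm_le_norm_of_mem hz
    _ = ‖A‖ := by simp [linfty_opNorm_def]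

theorem IsDiagDominantBy.le_norm_mulVec [DecidableEq n] {𝕜 : Type*} [NormedDivisionRing 𝕜]
    {B : Matrix n n 𝕜} {β : ℝ} (hB : B.IsDiagDominantBy β) (v : n → 𝕜) :
    β * ‖v‖ ≤ ‖B *ᵥ v‖ := by
  rcases isEmpty_or_nonempty n with hn | hn
  · simp [Subsingleton.elim v 0]
  obtain ⟨i, -, hi⟩ := Finset.exists_max_image Finset.univ (fun j => ‖v j‖) Finset.univ_nonempty
  have hvi : ‖v‖ = ‖v i‖ := le_antisymm
    ((pi_norm_le_iff_of_nonneg (norm_nonneg _)).2 fun j => hi j (Finset.mem_univ j))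
    (norm_le_pi_norm v i)
  have hrow : (B *ᵥ v) i = B i i * v i + ∑ j ∈ Finset.univ.erase i, B i j * v j := by
    rw [mulVec, dotProduct, Finset.add_sum_erase _ (fun j => B i j * v j) (Finset.mem_univ i)]
  have hoff : ‖∑ j ∈ Finset.univ.erase i, B i j * v j‖ ≤
      (∑ j ∈ Finset.univ.erase i, ‖B i j‖) * ‖v i‖ := by
    rw [Finset.sum_mul]
    refine (norm_sum_le _ _).trans (Finset.sum_le_sum fun j _ => ?_)
    rw [norm_mul]
    gcongr
    exact hi j (Finset.mem_univ j)
  calc β * ‖v‖ ≤ (‖B i i‖ - ∑ j ∈ Finset.univ.erase i, ‖B i j‖) * ‖v i‖ := by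
        rw [hvi]; gcongr; linarith [hB i]
    _ ≤ ‖(B *ᵥ v) i‖ := by
        have := norm_sub_le (B i i * v i + ∑ j ∈ Finset.univ.erase i, B i j * v j)
          (∑ j ∈ Finset.univ.erase i, B i j * v j)
        rw [add_sub_cancel_right, norm_mul] at this
        rw [hrow, sub_mul]
        linarith
    _ ≤ ‖B *ᵥ v‖ := norm_le_pi_norm _ i

theorem IsDiagDominantBy.linfty_opNorm_inv_le {𝕜 : Type*} [NontriviallyNormedField 𝕜]
    [NormedAlgebra ℝ 𝕜] [DecidableEq n] {B : Matrix n n 𝕜} {β : ℝ} (hB : B.IsDiagDominantBy β)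
    (hβ : 0 < β) : ‖B⁻¹‖ ≤ β⁻¹ := by
  have hunit : IsUnit B := by
    refine mulVec_injective_iff_isUnit.1 fun u v huv => sub_eq_zero.1 (norm_le_zero_iff.1 ?_)
    have := hB.le_norm_mulVec (u - v)
    rw [mulVec_sub, huv, sub_self, norm_zero] at this
    nlinarith [norm_nonneg (u - v)]
  rw [linfty_opNorm_eq_opNorm]
  refine ContinuousLinearMap.opNorm_le_bound _ (inv_nonneg.2 hβ.le) fun v => ?_
  show ‖B⁻¹ *ᵥ v‖ ≤ _
  have := hB.le_norm_mulVec (B⁻¹ *ᵥ v)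
  rw [mulVec_mulVec, mul_nonsing_inv _ ((isUnit_iff_isUnit_det B).1 hunit), one_mulVec] at this
  rw [inv_mul_eq_div, le_div_iff₀ hβ, mul_comm]
  exact this

theorem IsSubgenerator.isDiagDominantBy_smul_one_sub [DecidableEq n] {M : Matrix n n ℝ}
    (hM : M.IsSubgenerator) {α β : ℝ} (hα : 0 ≤ α) (hβ : 0 ≤ β) :
    (β • 1 - α • M).IsDiagDominantBy β := by
  intro i
  have hrow := Finset.add_sum_erase Finset.univ (M i) (Finset.mem_univ i)
  have hoff_nonneg : 0 ≤ ∑ j ∈ Finset.univ.erase i, M i j :=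
    Finset.sum_nonneg fun j hj => hM.offDiag_nonneg i j (Finset.ne_of_mem_erase hj).symm
  have hoff : ∑ j ∈ Finset.univ.erase i, ‖(β • 1 - α • M) i j‖ =
      α * ∑ j ∈ Finset.univ.erase i, M i j := by
    rw [Finset.mul_sum]
    refine Finset.sum_congr rfl fun j hj => ?_
    have hij : i ≠ j := (Finset.ne_of_mem_erase hj).symm
    simp [one_apply_ne hij, abs_of_nonneg hα, abs_of_nonneg (hM.offDiag_nonneg i j hij)]
  have hdiag : ‖(β • 1 - α • M) i i‖ = β - α * M i i := by
    simp only [sub_apply, smul_apply, one_apply_eq, smul_eq_mul, mul_one, Real.norm_eq_abs]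
    exact abs_of_nonneg (by nlinarith [hM.sum_row_nonpos i])
  rw [hoff, hdiag]
  nlinarith [hM.sum_row_nonpos i]

theorem IsSubgenerator.specRad_smul_inv_mul_le [DecidableEq n] {M : Matrix n n ℝ}
    (hM : M.IsSubgenerator) (N : Matrix n n ℝ) {α β : ℝ} (hα : 0 ≤ α) (hβ : 0 < β) :
    specRad (α • ((β • 1 - α • M)⁻¹ * N)) ≤ α * normInf N / β := by
  have hinv : ‖(β • 1 - α • M)⁻¹‖ ≤ β⁻¹ :=
    (hM.isDiagDominantBy_smul_one_sub hα hβ.le).linfty_opNorm_inv_le hβ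
  calc specRad (α • ((β • 1 - α • M)⁻¹ * N))
      ≤ ‖α • ((β • 1 - α • M)⁻¹ * N)‖ := specRad_le_linfty_opNorm _
    _ ≤ α * (β⁻¹ * ‖N‖) := by
        rw [norm_smul, Real.norm_of_nonneg hα]
        gcongr
        exact (norm_mul_le _ _).trans (mul_le_mul_of_nonneg_right hinv (norm_nonneg N))
    _ = α * normInf N / β := by rw [linfty_opNorm_eq_normInf]; ring

end Matrix

theorem Fin.sum_ite_val_eq_le_one (m k : ℕ) :
    ∑ j : Fin m, (if (j : ℕ) = k then (1 : ℝ) else 0) ≤ 1 := by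
  rw [Fin.sum_univ_eq_sum_range (fun j => if j = k then (1 : ℝ) else 0) m, Finset.sum_ite_eq']
  split_ifs <;> norm_num

theorem isSubgenerator_neuLap (m : ℕ) (Δ : ℝ) : (neuLap m Δ).IsSubgenerator where
  offDiag_nonneg i j hij := by
    simp only [neuLap, of_apply, if_neg hij]
    split_ifs <;> positivity
  sum_row_nonpos i := by
    -- Neumann boundary conditions reflect the ghost neighbours `-1 ↦ 1` and `m ↦ m - 2`.
    let right : ℕ := if (i : ℕ) + 1 = m then (i : ℕ) - 1 else i + 1
    let left : ℕ := if (i : ℕ) = 0 then 1 else (i : ℕ) - 1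
    have hentry : ∀ j, neuLap m Δ i j ≤ 1 / Δ ^ 2 *
        ((if (j : ℕ) = right then 1 else 0) + (if (j : ℕ) = left then 1 else 0) -
          2 * if i = j then 1 else 0) := by
      intro j
      have h2 : 2 / Δ ^ 2 = 2 * (1 / Δ ^ 2) := by ring
      have hm2 : -2 / Δ ^ 2 = -2 * (1 / Δ ^ 2) := by ring
      have hΔ : 0 ≤ 1 / Δ ^ 2 := by positivity
      have hi := i.isLt
      have hj := j.isLt
      simp only [neuLap, of_apply, Fin.ext_iff, h2, hm2, right, left]
      split_ifs <;> first | omega | nlinarith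
    calc ∑ j, neuLap m Δ i j
        ≤ ∑ j : Fin m, 1 / Δ ^ 2 * ((if (j : ℕ) = right then 1 else 0) +
            (if (j : ℕ) = left then 1 else 0) - 2 * if i = j then 1 else 0) :=
          Finset.sum_le_sum fun j _ => hentry j
      _ = 1 / Δ ^ 2 * (∑ j : Fin m, (if (j : ℕ) = right then 1 else 0) +
            ∑ j : Fin m, (if (j : ℕ) = left then 1 else 0) - 2) := by
          rw [← Finset.mul_sum, Finset.sum_sub_distrib, Finset.sum_add_distrib, ← Finset.mul_sum,
            Finset.sum_ite_eq, if_pos (Finset.mem_univ i), mul_one]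
      _ ≤ 0 := mul_nonpos_of_nonneg_of_nonpos (by positivity)
          (by linarith [Fin.sum_ite_val_eq_le_one m right, Fin.sum_ite_val_eq_le_one m left])

theorem isSubgenerator_kronLapN (mx my : ℕ) (Δx Δy : ℝ) : (kronLapN mx my Δx Δy).IsSubgenerator :=
  (isSubgenerator_neuLap mx Δx).kroneckerSum (isSubgenerator_neuLap my Δy)

theorem stmt17_general (γ : ℝ)
    (Dφ Dc w Δt : ℝ) (hDφ : 0 < Dφ) (hDc : 0 < Dc) (hw : 0 < w) (hΔt : 0 < Δt)
    (mx my : ℕ)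
    (Δx Δy : ℝ)
    (h : ℝ)
    (MN N : Matrix (Fin my × Fin mx) (Fin my × Fin mx) ℝ)
    (hMN : MN = kronLapN mx my Δx Δy)
    (hNinf : normInf N ≤ 4 / h ^ 2)
    (hcond1 : h ^ 2 > (1 + Real.sqrt 41) * Dφ / w ∨
      Δt < γ * (Real.sqrt 41 - 1) * h ^ 2 / (40 * Dφ + 2 * w * h ^ 2))
    (hcond2 : Δt < γ * (Real.sqrt 41 - 1) * h ^ 2 / (40 * Dc)) :
    specRad ((Δt * Dφ) • (((γ + w * Δt) • 1 - (Δt * Dφ) • MN)⁻¹ * N)) < 1 ∧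
      specRad ((Δt * Dc) • ((γ • 1 - (Δt * Dc) • MN)⁻¹ * N)) < 1 := by
  subst hMN
  have hsqrt_gt : 3 < Real.sqrt 41 := Real.lt_sqrt_of_sq_lt (by norm_num)
  have hsqrt_lt : Real.sqrt 41 < 11 := (Real.sqrt_lt' (by norm_num)).2 (by norm_num)
  rw [lt_div_iff₀ (by positivity)] at hcond2
  have hγh : 0 < γ * h ^ 2 := by nlinarith [mul_pos hΔt hDc]
  have hh : 0 < h ^ 2 := lt_of_le_of_ne (sq_nonneg h) fun h0 => by simp [← h0] at hγh
  have hγ : 0 < γ := pos_of_mul_pos_left hγh hh.le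
  have hc : 4 * (Δt * Dc) < γ * h ^ 2 := by nlinarith
  have hφ : 4 * (Δt * Dφ) < (γ + w * Δt) * h ^ 2 := by
    rcases hcond1 with hcond1 | hcond1
    · rw [gt_iff_lt, div_lt_iff₀ hw] at hcond1
      nlinarith [mul_pos hΔt hDφ, mul_pos hΔt hγh]
    · rw [lt_div_iff₀ (by positivity)] at hcond1
      nlinarith [mul_pos hΔt hDφ, mul_pos (mul_pos hw hΔt) hh]
  have hspec : ∀ α β : ℝ, 0 ≤ α → 0 < β → 4 * α < β * h ^ 2 →
      specRad (α • ((β • 1 - α • kronLapN mx my Δx Δy)⁻¹ * N)) < 1 := fun α β hα hβ hαβ =>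
    ((isSubgenerator_kronLapN mx my Δx Δy).specRad_smul_inv_mul_le N hα hβ).trans_lt <| by
      rw [div_lt_one hβ]
      calc α * normInf N ≤ α * (4 / h ^ 2) := by gcongr
        _ < β := by rw [mul_div_assoc', div_lt_iff₀ hh]; linarith
  exact ⟨hspec _ _ (by positivity) (by positivity) hφ, hspec _ _ (by positivity) hγ hc⟩

theorem stmt17 (γ : ℝ) (hγ : γ = 1 ∨ γ = 3 / 2)
    (Dφ Dc w Δt : ℝ) (hDφ : 0 < Dφ) (hDc : 0 < Dc) (hw : 0 < w) (hΔt : 0 < Δt)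
    (mx my : ℕ) (hmx : 2 ≤ mx) (hmy : 2 ≤ my)
    (Δx Δy : ℝ) (hΔx : 0 < Δx) (hΔy : 0 < Δy)
    (h s : ℝ) (hh : h = min Δx Δy) (hs : s = 1 / Δx ^ 2 + 1 / Δy ^ 2)
    (MN N : Matrix (Fin my × Fin mx) (Fin my × Fin mx) ℝ)
    (hMN : MN = kronLapN mx my Δx Δy)
    (hNnil : N * N = 0)
    (hN1 : norm1 N ≤ 4 / h ^ 2)
    (hNinf : normInf N ≤ 4 / h ^ 2)
    (hA1 : Δt * Dφ * s < γ + w * Δt)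
    (hA2 : Δt * Dc * s < γ)
    (hcond1 : h ^ 2 > (1 + Real.sqrt 41) * Dφ / w ∨
      Δt < γ * (Real.sqrt 41 - 1) * h ^ 2 / (40 * Dφ + 2 * w * h ^ 2))
    (hcond2 : Δt < γ * (Real.sqrt 41 - 1) * h ^ 2 / (40 * Dc)) :
    specRad ((Δt * Dφ) • (((γ + w * Δt) • 1 - (Δt * Dφ) • MN)⁻¹ * N)) < 1 ∧
      specRad ((Δt * Dc) • ((γ • 1 - (Δt * Dc) • MN)⁻¹ * N)) < 1 :=
  stmt17_general γ Dφ Dc w Δt hDφ hDc hw hΔt mx my Δx Δy h MN N hMN hNinf hcond1 hcond2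
end
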